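/- For every real ν > 1/2 and every integer n ≥ 1, one has P^{(ν)}_n(1) > 0 and Q^{(ν)}_{n−1}(1)/P^{(ν)}_n(1) = (2ν/(2ν−1))·(1 − Γ(2ν)·Γ(n+1)/Γ(n+2ν)), where Γ is the Gamma function. Consequently lim_{n→∞} P^{(ν)}_n(1)/Q^{(ν)}_{n−1}(1) = (2ν−1)/(2ν). -/

import Mathlib

/-!
`P_n(1) = ∏_{k<n} (k+2ν)/(2(k+ν))`, and with `c_n = Γ(2ν)Γ(n+1)/Γ(n+2ν)` (so that
`c_{n+1} = c_n (n+1)/(n+2ν)`) the sequence `c_n P_n(1)` satisfies the same three-term recurrence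
as `P_n(1)`. The recurrence of `Q_n` is that of `P_n` shifted by one, so `Q_n(1)` is the
combination `2ν/(2ν−1)·(P_{n+1}(1) − c_{n+1} P_{n+1}(1))` matching its two initial values.
For the limit, Euler's formula `Γ(s) = lim n^s n!/(s(s+1)⋯(s+n))` at `s = 2ν−1 > 0` gives
`c_n ~ Γ(2ν) n^{1−2ν} → 0`.
-/

open Polynomial Filter MeasureTheory

noncomputable section

/-- Recurrence coefficients `β_k = k(k+2ν−1)/(4(k+ν)(k+ν−1))` of the monic
ultraspherical polynomials. -/
def ultraBeta (ν : ℝ) (k : ℕ) : ℝ :=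
  k * (k + 2 * ν - 1) / (4 * (k + ν) * (k + ν - 1))

/-- Monic ultraspherical polynomials `P^{(ν)}_0 = 1`, `P^{(ν)}_1 = X`,
`P^{(ν)}_{k+1} = X·P^{(ν)}_k − β_k·P^{(ν)}_{k−1}`. -/
def ultraP (ν : ℝ) : ℕ → Polynomial ℝ
  | 0 => 1
  | 1 => X
  | (k + 2) => X * ultraP ν (k + 1) - C (ultraBeta ν (k + 1)) * ultraP ν k

/-- First-order numerator polynomials `Q^{(ν)}_0 = 1`, `Q^{(ν)}_1 = X`,
`Q^{(ν)}_{k+1} = X·Q^{(ν)}_k − β_{k+1}·Q^{(ν)}_{k−1}`. -/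
def ultraQ (ν : ℝ) : ℕ → Polynomial ℝ
  | 0 => 1
  | 1 => X
  | (k + 2) => X * ultraQ ν (k + 1) - C (ultraBeta ν (k + 2)) * ultraQ ν k

/-- Co-dilated ultraspherical polynomials: same recurrence as `ultraP ν`, except that
the single coefficient `β_1` is replaced by `λ·β_1`. -/
def ultraPstar (ν lam : ℝ) : ℕ → Polynomial ℝ
  | 0 => 1
  | 1 => X
  | (k + 2) => X * ultraPstar ν lam (k + 1) -
      C (if k + 1 = 1 then lam * ultraBeta ν 1 else ultraBeta ν (k + 1)) * ultraPstar ν lam k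

theorem seq_eq_of_two_step_recurrence {α : Type*} (F : ℕ → α → α → α) {y z : ℕ → α}
    (hy : ∀ k, y (k + 2) = F k (y k) (y (k + 1))) (hz : ∀ k, z (k + 2) = F k (z k) (z (k + 1)))
    (h0 : y 0 = z 0) (h1 : y 1 = z 1) : y = z := by
  have key : ∀ n, y n = z n ∧ y (n + 1) = z (n + 1) := by
    intro n
    induction n with
    | zero => exact ⟨h0, h1⟩
    | succ k ih => exact ⟨ih.2, by rw [hy, hz, ih.1, ih.2]⟩
  exact funext fun n => (key n).1

theorem Real.Gamma_mul_prod_range_add {s : ℝ} (hs : 0 < s) (n : ℕ) :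
    Real.Gamma s * ∏ j ∈ Finset.range n, (s + j) = Real.Gamma (s + n) := by
  induction n with
  | zero => simp
  | succ n ih =>
    rw [Finset.prod_range_succ, ← mul_assoc, ih, Nat.cast_succ, ← add_assoc,
      Real.Gamma_add_one (by positivity), mul_comm]

namespace Ultraspherical

variable {ν : ℝ}

def ultraPAtOne (ν : ℝ) (n : ℕ) : ℝ :=
  ∏ k ∈ Finset.range n, (k + 2 * ν) / (2 * (k + ν))

def gammaRatio (ν : ℝ) (n : ℕ) : ℝ :=
  Real.Gamma (2 * ν) * Real.Gamma (n + 1) / Real.Gamma (n + 2 * ν)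

theorem ultraPAtOne_pos (hν : 0 < ν) (n : ℕ) : 0 < ultraPAtOne ν n :=
  Finset.prod_pos fun k _ => by positivity

theorem ultraBeta_succ (k : ℕ) :
    ultraBeta ν (k + 1) = (k + 1) * (k + 2 * ν) / (4 * (k + 1 + ν) * (k + ν)) := by
  simp only [ultraBeta]
  push_cast
  ring

theorem ultraPAtOne_recurrence (hν : 0 < ν) (k : ℕ) :
    ultraPAtOne ν (k + 2) = ultraPAtOne ν (k + 1) - ultraBeta ν (k + 1) * ultraPAtOne ν k := by
  simp only [ultraPAtOne, Finset.prod_range_succ, ultraBeta_succ]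
  have : (k : ℝ) + ν ≠ 0 := by positivity
  have : (k : ℝ) + 1 + ν ≠ 0 := by positivity
  push_cast
  field_simp
  ring

theorem gammaRatio_zero (hν : 0 < ν) : gammaRatio ν 0 = 1 := by
  simp [gammaRatio, (Real.Gamma_pos_of_pos (by positivity : 0 < 2 * ν)).ne']

theorem gammaRatio_succ (hν : 0 < ν) (n : ℕ) :
    gammaRatio ν (n + 1) = gammaRatio ν n * ((n + 1) / (n + 2 * ν)) := by
  have hn : (n : ℝ) + 2 * ν ≠ 0 := by positivity
  have hΓ : Real.Gamma (n + 2 * ν) ≠ 0 := (Real.Gamma_pos_of_pos (by positivity)).ne'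
  simp only [gammaRatio, Nat.cast_succ, add_right_comm _ (1 : ℝ),
    Real.Gamma_add_one hn, Real.Gamma_add_one (Nat.cast_add_one_ne_zero n)]
  field_simp

theorem gammaRatio_mul_ultraPAtOne_recurrence (hν : 0 < ν) (k : ℕ) :
    gammaRatio ν (k + 2) * ultraPAtOne ν (k + 2) =
      gammaRatio ν (k + 1) * ultraPAtOne ν (k + 1) -
        ultraBeta ν (k + 1) * (gammaRatio ν k * ultraPAtOne ν k) := by
  simp only [ultraPAtOne, Finset.prod_range_succ, gammaRatio_succ hν, ultraBeta_succ]
  have : (k : ℝ) + ν ≠ 0 := by positivity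
  have : (k : ℝ) + 1 + ν ≠ 0 := by positivity
  have : (k : ℝ) + 2 * ν ≠ 0 := by positivity
  have : (k : ℝ) + 1 + 2 * ν ≠ 0 := by positivity
  push_cast
  field_simp
  ring

theorem ultraP_eval_one (hν : 0 < ν) (n : ℕ) : (ultraP ν n).eval 1 = ultraPAtOne ν n := by
  refine congrFun (seq_eq_of_two_step_recurrence (fun k a b => b - ultraBeta ν (k + 1) * a)
    (y := fun n => (ultraP ν n).eval 1) (fun k => by simp [ultraP]) (ultraPAtOne_recurrence hν)
    (by simp [ultraP, ultraPAtOne]) ?_) n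
  simp only [ultraP, eval_X, ultraPAtOne, Finset.prod_range_one, Nat.cast_zero, zero_add]
  field_simp

theorem ultraQ_eval_one (hν : 0 < ν) (hν₁ : 2 * ν ≠ 1) (n : ℕ) :
    (ultraQ ν n).eval 1 =
      2 * ν / (2 * ν - 1) * ((1 - gammaRatio ν (n + 1)) * ultraPAtOne ν (n + 1)) := by
  have : 2 * ν - 1 ≠ 0 := sub_ne_zero.2 hν₁
  refine congrFun (seq_eq_of_two_step_recurrence (fun k a b => b - ultraBeta ν (k + 2) * a)
    (y := fun n => (ultraQ ν n).eval 1)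
    (z := fun n => 2 * ν / (2 * ν - 1) * ((1 - gammaRatio ν (n + 1)) * ultraPAtOne ν (n + 1)))
    (fun k => by simp [ultraQ]) (fun k => ?_) ?_ ?_) n
  · linear_combination (2 * ν / (2 * ν - 1)) *
      (ultraPAtOne_recurrence hν (k + 1) - gammaRatio_mul_ultraPAtOne_recurrence hν (k + 1))
  · simp only [ultraQ, eval_one, gammaRatio_succ hν, gammaRatio_zero hν, ultraPAtOne,
      Finset.prod_range_one, Nat.cast_zero, zero_add]
    field_simp
  · simp only [ultraQ, eval_X, gammaRatio_succ hν, gammaRatio_zero hν, ultraPAtOne,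
      Finset.prod_range_succ, Finset.prod_range_zero]
    push_cast
    field_simp
    ring

theorem gammaRatio_eq_GammaSeq (hν : 1 / 2 < ν) {n : ℕ} (hn : n ≠ 0) :
    gammaRatio ν n = (2 * ν - 1) * Real.GammaSeq (2 * ν - 1) n / (n : ℝ) ^ (2 * ν - 1) := by
  have hs : 0 < 2 * ν - 1 := by linarith
  have hprod := Real.Gamma_mul_prod_range_add hs (n + 1)
  have hΓs : Real.Gamma (2 * ν) = (2 * ν - 1) * Real.Gamma (2 * ν - 1) := by
    rw [← Real.Gamma_add_one hs.ne', sub_add_cancel]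
  have hΓn : Real.Gamma (n + 2 * ν) = Real.Gamma (2 * ν - 1 + (n + 1 : ℕ)) := by
    push_cast; ring_nf
  have : (n : ℝ) ^ (2 * ν - 1) ≠ 0 := by positivity
  have : Real.Gamma (2 * ν - 1) ≠ 0 := (Real.Gamma_pos_of_pos hs).ne'
  rw [gammaRatio, Real.GammaSeq, hΓs, hΓn, ← hprod, Real.Gamma_nat_eq_factorial]
  field_simp

theorem tendsto_gammaRatio_atTop (hν : 1 / 2 < ν) : Tendsto (gammaRatio ν) atTop (nhds 0) := by
  have hs : 0 < 2 * ν - 1 := by linarith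
  have hpow : Tendsto (fun n : ℕ => ((n : ℝ) ^ (2 * ν - 1))⁻¹) atTop (nhds 0) :=
    tendsto_inv_atTop_zero.comp ((tendsto_rpow_atTop hs).comp tendsto_natCast_atTop_atTop)
  have hlim := ((Real.GammaSeq_tendsto_Gamma (2 * ν - 1)).const_mul (2 * ν - 1)).mul hpow
  rw [mul_zero] at hlim
  refine hlim.congr' ?_
  filter_upwards [eventually_ne_atTop 0] with n hn
  rw [gammaRatio_eq_GammaSeq hν hn, div_eq_mul_inv]

end Ultraspherical

open Ultraspherical in
theorem ultraspherical_numerator_quotient (ν : ℝ) (hν : 1 / 2 < ν) :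
    (∀ n : ℕ, 1 ≤ n →
      0 < (ultraP ν n).eval 1 ∧
      (ultraQ ν (n - 1)).eval 1 / (ultraP ν n).eval 1 =
        2 * ν / (2 * ν - 1) *
          (1 - Real.Gamma (2 * ν) * Real.Gamma (n + 1) / Real.Gamma (n + 2 * ν))) ∧
    Tendsto (fun n : ℕ => (ultraP ν n).eval 1 / (ultraQ ν (n - 1)).eval 1) atTop
      (nhds ((2 * ν - 1) / (2 * ν))) := by
  have hν₀ : 0 < ν := by linarith
  have hν₁ : 2 * ν ≠ 1 := by linarith
  have hquot : ∀ n : ℕ, 1 ≤ n → 0 < (ultraP ν n).eval 1 ∧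
      (ultraQ ν (n - 1)).eval 1 / (ultraP ν n).eval 1 =
        2 * ν / (2 * ν - 1) * (1 - gammaRatio ν n) := by
    rintro (_ | m) hm
    · omega
    have hpos := ultraPAtOne_pos hν₀ (m + 1)
    rw [Nat.add_sub_cancel, ultraP_eval_one hν₀, ultraQ_eval_one hν₀ hν₁]
    exact ⟨hpos, by field_simp⟩
  refine ⟨hquot, ?_⟩
  have hK : 2 * ν / (2 * ν - 1) ≠ 0 := div_ne_zero (by positivity) (by linarith)
  have hlim : Tendsto (fun n : ℕ => (ultraQ ν (n - 1)).eval 1 / (ultraP ν n).eval 1) atTop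
      (nhds (2 * ν / (2 * ν - 1))) := by
    have := ((tendsto_gammaRatio_atTop hν).const_sub 1).const_mul (2 * ν / (2 * ν - 1))
    rw [sub_zero, mul_one] at this
    refine this.congr' ?_
    filter_upwards [eventually_ge_atTop 1] with n hn
    exact (hquot n hn).2.symm
  simpa only [inv_div] using hlim.inv₀ hK

end
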